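/- Given a Brauer datum (X, c, e, τ, δ) in a k-linear monoidal category C, for every n ∈ ℕ the following identities hold in Hom(X ⊗ X, X ⊗ X): (δ^n ⊗ id_X) ∘ τ − τ ∘ (id_X ⊗ δ^n) = Σ_{r=0}^{n−1} (δ^r ⊗ δ^{n−1−r}) − Σ_{r=0}^{n−1} (δ^r ⊗ id_X) ∘ c ∘ e ∘ (id_X ⊗ δ^{n−1−r}), and τ ∘ (δ^n ⊗ id_X) − (id_X ⊗ δ^n) ∘ τ = Σ_{r=0}^{n−1} (δ^r ⊗ δ^{n−1−r}) − Σ_{r=0}^{n−1} (id_X ⊗ δ^r) ∘ c ∘ e ∘ (δ^{n−1−r} ⊗ id_X). -/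

import Mathlib

open CategoryTheory CategoryTheory.MonoidalCategory

universe v u

/-- A Brauer datum in a `k`-linear monoidal category: an object `X` together with
cup, cap, crossing and dot morphisms satisfying the defining relations of the
affine Brauer category (with unitors and associators written explicitly). -/
structure BrauerDatum (k : Type*) [CommRing k] [Invertible (2 : k)]
    (C : Type u) [Category.{v} C] [MonoidalCategory C]
    [Preadditive C] [Linear k C] [MonoidalPreadditive C] [MonoidalLinear k C] where
  X : C
  cup : 𝟙_ C ⟶ X ⊗ X
  cap : X ⊗ X ⟶ 𝟙_ C
  cross : X ⊗ X ⟶ X ⊗ X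
  dot : X ⟶ X
  cross_cross : cross ≫ cross = 𝟙 (X ⊗ X)
  braid : (cross ▷ X) ≫ (α_ X X X).hom ≫ (X ◁ cross) ≫ (α_ X X X).inv ≫ (cross ▷ X) =
    (α_ X X X).hom ≫ (X ◁ cross) ≫ (α_ X X X).inv ≫ (cross ▷ X) ≫
      (α_ X X X).hom ≫ (X ◁ cross) ≫ (α_ X X X).inv
  zig : (ρ_ X).inv ≫ (X ◁ cup) ≫ (α_ X X X).inv ≫ (cap ▷ X) ≫ (λ_ X).hom = 𝟙 X
  zag : (λ_ X).inv ≫ (cup ▷ X) ≫ (α_ X X X).hom ≫ (X ◁ cap) ≫ (ρ_ X).hom = 𝟙 X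
  cross_cap : cross ≫ cap = cap
  cap_slide : (cross ▷ X) ≫ (α_ X X X).hom ≫ (X ◁ cap) ≫ (ρ_ X).hom =
    (α_ X X X).hom ≫ (X ◁ cross) ≫ (α_ X X X).inv ≫ (cap ▷ X) ≫ (λ_ X).hom
  dot_cross : cross ≫ (dot ▷ X) - (X ◁ dot) ≫ cross = 𝟙 (X ⊗ X) - cap ≫ cup
  dot_cap : (dot ▷ X) ≫ cap = -((X ◁ dot) ≫ cap)

namespace BrauerDatum

variable {k : Type*} [CommRing k] [Invertible (2 : k)]
  {C : Type u} [Category.{v} C] [MonoidalCategory C]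
  [Preadditive C] [Linear k C] [MonoidalPreadditive C] [MonoidalLinear k C]

variable (D : BrauerDatum k C)

/-- The `n`-fold composite of the dot. -/
def dpow : ℕ → (D.X ⟶ D.X)
  | 0 => 𝟙 D.X
  | n + 1 => dpow n ≫ D.dot

/-- The `n`-dotted bubble `ω_n = e ∘ (id_X ⊗ δ^n) ∘ c` in `End(𝟙)`. -/
def bub (n : ℕ) : 𝟙_ C ⟶ 𝟙_ C := D.cup ≫ (D.X ◁ D.dpow n) ≫ D.cap

end BrauerDatum

/-! ### Auxiliary string-diagram lemmas in a general monoidal category -/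

section Aux

variable {C' : Type*} [Category C'] [MonoidalCategory C']

/-- Bend the first output of `g` down against a new strand, using the cap `e`. -/
def PsiA (X : C') (e : X ⊗ X ⟶ 𝟙_ C') (g : X ⟶ X ⊗ (X ⊗ X)) : X ⊗ X ⟶ X ⊗ X :=
  (X ◁ g) ≫ (α_ X X (X ⊗ X)).inv ≫ (e ▷ (X ⊗ X)) ≫ (λ_ (X ⊗ X)).hom

/-- Bend a new strand up to the left of `h`, using the cup `c`. -/
def PhiA (X : C') (c : 𝟙_ C' ⟶ X ⊗ X) (h : X ⊗ X ⟶ X ⊗ X) : X ⟶ X ⊗ (X ⊗ X) :=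
  (λ_ X).inv ≫ (c ▷ X) ≫ (α_ X X X).hom ≫ (X ◁ h)

/-- The cup-slide composite: cup to the right, then cross with the left leg. -/
def nuA (X : C') (c : 𝟙_ C' ⟶ X ⊗ X) (t : X ⊗ X ⟶ X ⊗ X) : X ⟶ X ⊗ (X ⊗ X) :=
  (ρ_ X).inv ≫ (X ◁ c) ≫ (α_ X X X).inv ≫ (t ▷ X) ≫ (α_ X X X).hom

variable (X : C') (c : 𝟙_ C' ⟶ X ⊗ X) (e : X ⊗ X ⟶ 𝟙_ C') (t : X ⊗ X ⟶ X ⊗ X)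

theorem phi_psiA (zag : (λ_ X).inv ≫ (c ▷ X) ≫ (α_ X X X).hom ≫ (X ◁ e) ≫ (ρ_ X).hom = 𝟙 X)
    (g : X ⟶ X ⊗ (X ⊗ X)) : PhiA X c (PsiA X e g) = g := by
  calc PhiA X c (PsiA X e g)
      = (λ_ X).inv ≫ ((c ▷ X) ≫ ((X ⊗ X) ◁ g)) ≫ (α_ X X (X ⊗ (X ⊗ X))).hom ≫
        (X ◁ (α_ X X (X ⊗ X)).inv) ≫ (X ◁ (e ▷ (X ⊗ X))) ≫ (X ◁ (λ_ (X ⊗ X)).hom) := by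
        simp only [PhiA, PsiA]; monoidal
    _ = (λ_ X).inv ≫ ((𝟙_ C' ◁ g) ≫ (c ▷ (X ⊗ (X ⊗ X)))) ≫ (α_ X X (X ⊗ (X ⊗ X))).hom ≫
        (X ◁ (α_ X X (X ⊗ X)).inv) ≫ (X ◁ (e ▷ (X ⊗ X))) ≫ (X ◁ (λ_ (X ⊗ X)).hom) := by
        rw [← whisker_exchange]
    _ = g ≫ (((λ_ X).inv ≫ (c ▷ X) ≫ (α_ X X X).hom ≫ (X ◁ e) ≫ (ρ_ X).hom) ▷ (X ⊗ X)) := by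
        monoidal
    _ = g := by rw [zag]; simp

theorem psi_phiA (zig : (ρ_ X).inv ≫ (X ◁ c) ≫ (α_ X X X).inv ≫ (e ▷ X) ≫ (λ_ X).hom = 𝟙 X) :
    PsiA X e (PhiA X c t) = t := by
  calc PsiA X e (PhiA X c t)
      = ((X ◁ (λ_ X).inv) ≫ (X ◁ (c ▷ X)) ≫ (α_ X (X ⊗ X) X).inv ≫
          ((α_ X X X).inv ▷ X) ≫ (α_ (X ⊗ X) X X).hom) ≫
        (((X ⊗ X) ◁ t) ≫ (e ▷ (X ⊗ X))) ≫ (λ_ (X ⊗ X)).hom := by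
        simp only [PhiA, PsiA]; monoidal
    _ = ((X ◁ (λ_ X).inv) ≫ (X ◁ (c ▷ X)) ≫ (α_ X (X ⊗ X) X).inv ≫
          ((α_ X X X).inv ▷ X) ≫ (α_ (X ⊗ X) X X).hom) ≫
        ((e ▷ (X ⊗ X)) ≫ (𝟙_ C' ◁ t)) ≫ (λ_ (X ⊗ X)).hom := by
        rw [whisker_exchange]
    _ = ((((ρ_ X).inv ≫ (X ◁ c) ≫ (α_ X X X).inv ≫ (e ▷ X) ≫ (λ_ X).hom) ▷ X)) ≫ t := by
        monoidal
    _ = t := by rw [zig]; simp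

theorem psi_nuA (zig : (ρ_ X).inv ≫ (X ◁ c) ≫ (α_ X X X).inv ≫ (e ▷ X) ≫ (λ_ X).hom = 𝟙 X)
    (cap_slide : (t ▷ X) ≫ (α_ X X X).hom ≫ (X ◁ e) ≫ (ρ_ X).hom =
      (α_ X X X).hom ≫ (X ◁ t) ≫ (α_ X X X).inv ≫ (e ▷ X) ≫ (λ_ X).hom) :
    PsiA X e (nuA X c t) = t := by
  calc PsiA X e (nuA X c t)
      = ((X ◁ ((ρ_ X).inv ≫ (X ◁ c))) ≫ (α_ X X (X ⊗ X)).inv ≫ (α_ (X ⊗ X) X X).inv) ≫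
        (((α_ X X X).hom ≫ (X ◁ t) ≫ (α_ X X X).inv ≫ (e ▷ X) ≫ (λ_ X).hom) ▷ X) := by
        simp only [PsiA, nuA]; monoidal
    _ = ((X ◁ ((ρ_ X).inv ≫ (X ◁ c))) ≫ (α_ X X (X ⊗ X)).inv ≫ (α_ (X ⊗ X) X X).inv) ≫
        (((t ▷ X) ≫ (α_ X X X).hom ≫ (X ◁ e) ≫ (ρ_ X).hom) ▷ X) := by
        rw [← cap_slide]
    _ = (ρ_ (X ⊗ X)).inv ≫ (((X ⊗ X) ◁ c) ≫ (t ▷ (X ⊗ X))) ≫ (α_ X X (X ⊗ X)).hom ≫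
        (X ◁ (α_ X X X).inv) ≫ (X ◁ (e ▷ X)) ≫ (X ◁ (λ_ X).hom) := by
        monoidal
    _ = (ρ_ (X ⊗ X)).inv ≫ ((t ▷ 𝟙_ C') ≫ ((X ⊗ X) ◁ c)) ≫ (α_ X X (X ⊗ X)).hom ≫
        (X ◁ (α_ X X X).inv) ≫ (X ◁ (e ▷ X)) ≫ (X ◁ (λ_ X).hom) := by
        rw [whisker_exchange]
    _ = t ≫ (X ◁ ((ρ_ X).inv ≫ (X ◁ c) ≫ (α_ X X X).inv ≫ (e ▷ X) ≫ (λ_ X).hom)) := by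
        monoidal
    _ = t := by rw [zig]; simp

theorem snake1A (zag : (λ_ X).inv ≫ (c ▷ X) ≫ (α_ X X X).hom ≫ (X ◁ e) ≫ (ρ_ X).hom = 𝟙 X)
    (f : 𝟙_ C' ⟶ X ⊗ X) :
    c ≫ (X ◁ ((ρ_ X).inv ≫ (X ◁ f) ≫ (α_ X X X).inv ≫ (e ▷ X) ≫ (λ_ X).hom)) = f := by
  calc c ≫ (X ◁ ((ρ_ X).inv ≫ (X ◁ f) ≫ (α_ X X X).inv ≫ (e ▷ X) ≫ (λ_ X).hom))
      = (ρ_ (𝟙_ C')).inv ≫ ((c ▷ 𝟙_ C') ≫ ((X ⊗ X) ◁ f)) ≫ (α_ X X (X ⊗ X)).hom ≫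
        (X ◁ (α_ X X X).inv) ≫ (X ◁ (e ▷ X)) ≫ (X ◁ (λ_ X).hom) := by
        monoidal
    _ = (ρ_ (𝟙_ C')).inv ≫ ((𝟙_ C' ◁ f) ≫ (c ▷ (X ⊗ X))) ≫ (α_ X X (X ⊗ X)).hom ≫
        (X ◁ (α_ X X X).inv) ≫ (X ◁ (e ▷ X)) ≫ (X ◁ (λ_ X).hom) := by
        rw [← whisker_exchange]
    _ = f ≫ (((λ_ X).inv ≫ (c ▷ X) ≫ (α_ X X X).hom ≫ (X ◁ e) ≫ (ρ_ X).hom) ▷ X) := by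
        monoidal
    _ = f := by rw [zag]; simp

theorem cup_crossA (zig : (ρ_ X).inv ≫ (X ◁ c) ≫ (α_ X X X).inv ≫ (e ▷ X) ≫ (λ_ X).hom = 𝟙 X)
    (zag : (λ_ X).inv ≫ (c ▷ X) ≫ (α_ X X X).hom ≫ (X ◁ e) ≫ (ρ_ X).hom = 𝟙 X)
    (cap_slide : (t ▷ X) ≫ (α_ X X X).hom ≫ (X ◁ e) ≫ (ρ_ X).hom =
      (α_ X X X).hom ≫ (X ◁ t) ≫ (α_ X X X).inv ≫ (e ▷ X) ≫ (λ_ X).hom)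
    (cross_cap : t ≫ e = e) : c ≫ t = c := by
  have cup_slide : nuA X c t = PhiA X c t := by
    calc nuA X c t = PhiA X c (PsiA X e (nuA X c t)) := (phi_psiA X c e zag _).symm
      _ = PhiA X c t := by rw [psi_nuA X c e t zig cap_slide]
  have G1 : (ρ_ X).inv ≫ (X ◁ (c ≫ t)) ≫ (α_ X X X).inv ≫ (e ▷ X) ≫ (λ_ X).hom = 𝟙 X := by
    calc (ρ_ X).inv ≫ (X ◁ (c ≫ t)) ≫ (α_ X X X).inv ≫ (e ▷ X) ≫ (λ_ X).hom
        = (ρ_ X).inv ≫ (X ◁ c) ≫ (α_ X X X).inv ≫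
          ((α_ X X X).hom ≫ (X ◁ t) ≫ (α_ X X X).inv ≫ (e ▷ X) ≫ (λ_ X).hom) := by
          monoidal
      _ = (ρ_ X).inv ≫ (X ◁ c) ≫ (α_ X X X).inv ≫
          ((t ▷ X) ≫ (α_ X X X).hom ≫ (X ◁ e) ≫ (ρ_ X).hom) := by rw [← cap_slide]
      _ = nuA X c t ≫ (X ◁ e) ≫ (ρ_ X).hom := by simp only [nuA, Category.assoc]
      _ = PhiA X c t ≫ (X ◁ e) ≫ (ρ_ X).hom := by rw [cup_slide]
      _ = (λ_ X).inv ≫ (c ▷ X) ≫ (α_ X X X).hom ≫ (X ◁ (t ≫ e)) ≫ (ρ_ X).hom := by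
          simp only [PhiA, Category.assoc, MonoidalCategory.whiskerLeft_comp]
      _ = 𝟙 X := by rw [cross_cap, zag]
  have h := snake1A X c e zag (c ≫ t)
  rw [G1] at h
  simpa using h.symm

end Aux

namespace BrauerDatum

variable {k : Type*} [CommRing k] [Invertible (2 : k)]
  {C : Type u} [Category.{v} C] [MonoidalCategory C]
  [Preadditive C] [Linear k C] [MonoidalPreadditive C] [MonoidalLinear k C]

variable (D : BrauerDatum k C)

theorem cup_cross : D.cup ≫ D.cross = D.cup :=
  cup_crossA D.X D.cup D.cap D.cross D.zig D.zag D.cap_slide D.cross_cap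

theorem dot_cross' : D.cross ≫ (D.dot ▷ D.X) =
    (D.X ◁ D.dot) ≫ D.cross + 𝟙 (D.X ⊗ D.X) - D.cap ≫ D.cup := by
  have h := D.dot_cross
  rw [sub_eq_iff_eq_add] at h
  rw [h]; abel

theorem dot_cross_rev : (D.dot ▷ D.X) ≫ D.cross =
    D.cross ≫ (D.X ◁ D.dot) + 𝟙 (D.X ⊗ D.X) - D.cap ≫ D.cup := by
  have h0 : (D.dot ▷ D.X) ≫ D.cross = D.cross ≫ (D.cross ≫ (D.dot ▷ D.X)) ≫ D.cross := by
    have : D.cross ≫ (D.cross ≫ (D.dot ▷ D.X)) ≫ D.cross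
        = ((D.cross ≫ D.cross) ≫ (D.dot ▷ D.X)) ≫ D.cross := by
      simp only [Category.assoc]
    rw [this, D.cross_cross, Category.id_comp]
  have hcc : D.cross ≫ D.cap ≫ D.cup = D.cap ≫ D.cup := by
    rw [← Category.assoc, D.cross_cap]
  rw [h0, D.dot_cross']
  simp only [Preadditive.add_comp, Preadditive.sub_comp, Preadditive.comp_add,
    Preadditive.comp_sub, Category.assoc, Category.id_comp, Category.comp_id,
    D.cross_cross, hcc]
  rw [show D.cup ≫ D.cross = D.cup from D.cup_cross]
  simp only [hcc]

theorem slide_left (n : ℕ) :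
    D.cross ≫ (D.dpow n ▷ D.X) - (D.X ◁ D.dpow n) ≫ D.cross =
      (∑ r ∈ Finset.range n, (D.dpow r ⊗ₘ D.dpow (n - 1 - r))) -
        ∑ r ∈ Finset.range n,
          (D.X ◁ D.dpow (n - 1 - r)) ≫ D.cap ≫ D.cup ≫ (D.dpow r ▷ D.X) := by
  induction n with
  | zero => simp [dpow]
  | succ n ih =>
    have hih : D.cross ≫ (D.dpow n ▷ D.X) = (D.X ◁ D.dpow n) ≫ D.cross +
        ((∑ r ∈ Finset.range n, (D.dpow r ⊗ₘ D.dpow (n - 1 - r))) -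
          ∑ r ∈ Finset.range n,
            (D.X ◁ D.dpow (n - 1 - r)) ≫ D.cap ≫ D.cup ≫ (D.dpow r ▷ D.X)) := by
      rw [sub_eq_iff_eq_add] at ih; rw [ih]; abel
    have hd := D.dot_cross'
    have hS1 : (∑ r ∈ Finset.range n, (D.dpow r ⊗ₘ D.dpow (n - 1 - r))) ≫ (D.dot ▷ D.X)
        = ∑ r ∈ Finset.range n, (D.dpow (r + 1) ⊗ₘ D.dpow (n - 1 - r)) := by
      rw [Preadditive.sum_comp]
      refine Finset.sum_congr rfl fun r _ => ?_
      rw [← tensorHom_id, tensorHom_comp_tensorHom, Category.comp_id]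
      rfl
    have hT1 : (∑ r ∈ Finset.range n,
          (D.X ◁ D.dpow (n - 1 - r)) ≫ D.cap ≫ D.cup ≫ (D.dpow r ▷ D.X)) ≫ (D.dot ▷ D.X)
        = ∑ r ∈ Finset.range n,
          (D.X ◁ D.dpow (n - 1 - r)) ≫ D.cap ≫ D.cup ≫ (D.dpow (r + 1) ▷ D.X) := by
      rw [Preadditive.sum_comp]
      refine Finset.sum_congr rfl fun r _ => ?_
      simp only [Category.assoc, ← comp_whiskerRight]
      rfl
    have hS2 : ∑ r ∈ Finset.range (n + 1), (D.dpow r ⊗ₘ D.dpow (n + 1 - 1 - r))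
        = (∑ r ∈ Finset.range n, (D.dpow (r + 1) ⊗ₘ D.dpow (n - 1 - r))) +
          (D.X ◁ D.dpow n) := by
      rw [Finset.sum_range_succ']
      congr 1
      · exact Finset.sum_congr rfl fun r _ => by
          rw [show n + 1 - 1 - (r + 1) = n - 1 - r from by omega]
      · rw [show n + 1 - 1 - 0 = n from by omega,
          show D.dpow 0 = 𝟙 D.X from rfl, id_tensorHom]
    have hT2 : ∑ r ∈ Finset.range (n + 1),
          (D.X ◁ D.dpow (n + 1 - 1 - r)) ≫ D.cap ≫ D.cup ≫ (D.dpow r ▷ D.X)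
        = (∑ r ∈ Finset.range n,
            (D.X ◁ D.dpow (n - 1 - r)) ≫ D.cap ≫ D.cup ≫ (D.dpow (r + 1) ▷ D.X)) +
          (D.X ◁ D.dpow n) ≫ D.cap ≫ D.cup := by
      rw [Finset.sum_range_succ']
      congr 1
      · exact Finset.sum_congr rfl fun r _ => by
          rw [show n + 1 - 1 - (r + 1) = n - 1 - r from by omega]
      · rw [show n + 1 - 1 - 0 = n from by omega,
          show D.dpow 0 = 𝟙 D.X from rfl, id_whiskerRight, Category.comp_id]
    have hx : ((D.X ◁ D.dpow n) ≫ D.cross) ≫ (D.dot ▷ D.X) =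
        (D.X ◁ D.dpow n) ≫ (D.X ◁ D.dot) ≫ D.cross + (D.X ◁ D.dpow n) -
          (D.X ◁ D.dpow n) ≫ D.cap ≫ D.cup := by
      rw [Category.assoc, hd]
      simp only [Preadditive.comp_add, Preadditive.comp_sub, Category.comp_id]
    rw [show D.dpow (n + 1) = D.dpow n ≫ D.dot from rfl, comp_whiskerRight,
      MonoidalCategory.whiskerLeft_comp, ← Category.assoc, hih,
      Preadditive.add_comp, Preadditive.sub_comp, hx, hS1, hT1, hS2, hT2]
    simp only [Category.assoc]
    abel

theorem slide_right (n : ℕ) :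
    (D.dpow n ▷ D.X) ≫ D.cross - D.cross ≫ (D.X ◁ D.dpow n) =
      (∑ r ∈ Finset.range n, (D.dpow r ⊗ₘ D.dpow (n - 1 - r))) -
        ∑ r ∈ Finset.range n,
          (D.dpow (n - 1 - r) ▷ D.X) ≫ D.cap ≫ D.cup ≫ (D.X ◁ D.dpow r) := by
  induction n with
  | zero => simp [dpow]
  | succ n ih =>
    have hih : (D.dpow n ▷ D.X) ≫ D.cross = D.cross ≫ (D.X ◁ D.dpow n) +
        ((∑ r ∈ Finset.range n, (D.dpow r ⊗ₘ D.dpow (n - 1 - r))) -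
          ∑ r ∈ Finset.range n,
            (D.dpow (n - 1 - r) ▷ D.X) ≫ D.cap ≫ D.cup ≫ (D.X ◁ D.dpow r)) := by
      rw [sub_eq_iff_eq_add] at ih; rw [ih]; abel
    have hm := D.dot_cross_rev
    have hS1 : (∑ r ∈ Finset.range n, (D.dpow r ⊗ₘ D.dpow (n - 1 - r))) ≫ (D.X ◁ D.dot)
        = ∑ r ∈ Finset.range n, (D.dpow r ⊗ₘ D.dpow (n - r)) := by
      rw [Preadditive.sum_comp]
      refine Finset.sum_congr rfl fun r hr => ?_
      rw [Finset.mem_range] at hr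
      rw [← id_tensorHom, tensorHom_comp_tensorHom, Category.comp_id,
        show n - r = (n - 1 - r) + 1 from by omega]
      rfl
    have hT1 : (∑ r ∈ Finset.range n,
          (D.dpow (n - 1 - r) ▷ D.X) ≫ D.cap ≫ D.cup ≫ (D.X ◁ D.dpow r)) ≫ (D.X ◁ D.dot)
        = ∑ r ∈ Finset.range n,
          (D.dpow (n - 1 - r) ▷ D.X) ≫ D.cap ≫ D.cup ≫ (D.X ◁ D.dpow (r + 1)) := by
      rw [Preadditive.sum_comp]
      refine Finset.sum_congr rfl fun r _ => ?_
      simp only [Category.assoc, ← MonoidalCategory.whiskerLeft_comp]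
      rfl
    have hS2 : ∑ r ∈ Finset.range (n + 1), (D.dpow r ⊗ₘ D.dpow (n + 1 - 1 - r))
        = (∑ r ∈ Finset.range n, (D.dpow r ⊗ₘ D.dpow (n - r))) + (D.dpow n ▷ D.X) := by
      rw [Finset.sum_range_succ, show n + 1 - 1 - n = 0 from by omega,
        show D.dpow 0 = 𝟙 D.X from rfl, tensorHom_id]
      congr 1
    have hT2 : ∑ r ∈ Finset.range (n + 1),
          (D.dpow (n + 1 - 1 - r) ▷ D.X) ≫ D.cap ≫ D.cup ≫ (D.X ◁ D.dpow r)
        = (∑ r ∈ Finset.range n,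
            (D.dpow (n - 1 - r) ▷ D.X) ≫ D.cap ≫ D.cup ≫ (D.X ◁ D.dpow (r + 1))) +
          (D.dpow n ▷ D.X) ≫ D.cap ≫ D.cup := by
      rw [Finset.sum_range_succ', show n + 1 - 1 - 0 = n from by omega,
        show D.dpow 0 = 𝟙 D.X from rfl, MonoidalCategory.whiskerLeft_id, Category.comp_id]
      congr 1
      exact Finset.sum_congr rfl fun r _ => by
        rw [show n + 1 - 1 - (r + 1) = n - 1 - r from by omega]
    have hy : (D.dpow n ▷ D.X) ≫ (D.dot ▷ D.X) ≫ D.cross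
        = (D.cross ≫ (D.X ◁ D.dpow n)) ≫ (D.X ◁ D.dot) +
          ((∑ r ∈ Finset.range n, (D.dpow r ⊗ₘ D.dpow (n - 1 - r))) -
            ∑ r ∈ Finset.range n,
              (D.dpow (n - 1 - r) ▷ D.X) ≫ D.cap ≫ D.cup ≫ (D.X ◁ D.dpow r)) ≫ (D.X ◁ D.dot) +
          (D.dpow n ▷ D.X) - (D.dpow n ▷ D.X) ≫ D.cap ≫ D.cup := by
      rw [hm]
      simp only [Preadditive.comp_add, Preadditive.comp_sub, Category.comp_id]
      rw [← Category.assoc, hih, Preadditive.add_comp]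
    rw [show D.dpow (n + 1) = D.dpow n ≫ D.dot from rfl, comp_whiskerRight,
      MonoidalCategory.whiskerLeft_comp, Category.assoc, hy,
      Preadditive.sub_comp, hS1, hT1, hS2, hT2]
    simp only [Category.assoc]
    abel

end BrauerDatum

/-- Sliding `n` dots through a crossing in the affine Brauer category. -/
theorem stmt_6 {k : Type*} [CommRing k] [Invertible (2 : k)]
    {C : Type u} [Category.{v} C] [MonoidalCategory C]
    [Preadditive C] [Linear k C] [MonoidalPreadditive C] [MonoidalLinear k C]
    (D : BrauerDatum k C) (n : ℕ) :
    (D.cross ≫ (D.dpow n ▷ D.X) - (D.X ◁ D.dpow n) ≫ D.cross =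
      (∑ r ∈ Finset.range n, (D.dpow r ⊗ₘ D.dpow (n - 1 - r))) -
        ∑ r ∈ Finset.range n,
          (D.X ◁ D.dpow (n - 1 - r)) ≫ D.cap ≫ D.cup ≫ (D.dpow r ▷ D.X)) ∧
    ((D.dpow n ▷ D.X) ≫ D.cross - D.cross ≫ (D.X ◁ D.dpow n) =
      (∑ r ∈ Finset.range n, (D.dpow r ⊗ₘ D.dpow (n - 1 - r))) -
        ∑ r ∈ Finset.range n,
          (D.dpow (n - 1 - r) ▷ D.X) ≫ D.cap ≫ D.cup ≫ (D.X ◁ D.dpow r)) :=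
  ⟨D.slide_left n, D.slide_right n⟩
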